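/- arXiv:1309.6073 — 2 statements merged into one kernel-verified Lean document; each statement's English description precedes it below -/
import Mathlib

section
/- Pruning bound: Let T be an index set of size t, T' ⊆ T∖S with |T'| = t−s, and let T_∇ ⊆ T with |T_∇| = t−s satisfy ‖(z)_{T_∇}‖₂ ≤ ‖(z)_{T'}‖₂ for a vector z. If supp(x) ⊆ S, then ‖(x)_{T_∇}‖₂ ≤ √2·‖(z − x)_T‖₂. -/
open Finset Matrix

noncomputable def enorm2 {n : ℕ} (x : Fin n → ℝ) : ℝ := Real.sqrt (∑ i, (x i)^2)

def restrict {n : ℕ} (U : Finset (Fin n)) (x : Fin n → ℝ) : Fin n → ℝ :=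
  fun i => if i ∈ U then x i else 0

def sparse {n : ℕ} (s : ℕ) (x : Fin n → ℝ) : Prop :=
  ∃ S : Finset (Fin n), S.card ≤ s ∧ ∀ i ∉ S, x i = 0

noncomputable def supp {n : ℕ} (x : Fin n → ℝ) : Finset (Fin n) := Finset.univ.filter (fun i => x i ≠ 0)

def RIP {m N : ℕ} (Φ : Matrix (Fin m) (Fin N) ℝ) (s : ℕ) (δ : ℝ) : Prop :=
  ∀ x : Fin N → ℝ, sparse s x →
    (1 - δ) * (enorm2 x)^2 ≤ (enorm2 (Φ.mulVec x))^2 ∧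
    (enorm2 (Φ.mulVec x))^2 ≤ (1 + δ) * (enorm2 x)^2

/-! Since `x` vanishes on `T' ⊆ T \ S`, `‖x_{T_∇}‖ = ‖x_{T_∇ \ T'}‖ ≤ ‖z_{T_∇ \ T'}‖ + ‖(z - x)_{T_∇ \ T'}‖`.
Cancelling the common part `T_∇ ∩ T'` in the hypothesis on `z` gives
`‖z_{T_∇ \ T'}‖ ≤ ‖z_{T' \ T_∇}‖ = ‖(z - x)_{T' \ T_∇}‖`, and two pieces of `z - x` on disjoint
subsets of `T` add up to at most `√2 ‖(z - x)_T‖`. -/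

lemma add_le_sqrt_two_mul_sqrt_sq_add_sq (a b : ℝ) : a + b ≤ √2 * √(a ^ 2 + b ^ 2) := by
  rw [← Real.sqrt_mul zero_le_two]
  exact Real.le_sqrt_of_sq_le add_sq_le

lemma enorm2_eq_norm {n : ℕ} (w : Fin n → ℝ) : enorm2 w = ‖WithLp.toLp 2 w‖ := by
  simp [enorm2, EuclideanSpace.norm_eq]

lemma enorm2_sub_le {n : ℕ} (u v : Fin n → ℝ) : enorm2 (u - v) ≤ enorm2 u + enorm2 v := by
  simpa only [enorm2_eq_norm, WithLp.toLp_sub] using norm_sub_le _ _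

lemma enorm2_restrict {n : ℕ} (U : Finset (Fin n)) (w : Fin n → ℝ) :
    enorm2 (restrict U w) = √(∑ i ∈ U, w i ^ 2) := by
  simp [enorm2, _root_.restrict, apply_ite (· ^ 2), sum_ite_mem]

lemma restrict_sub {n : ℕ} (U : Finset (Fin n)) (u v : Fin n → ℝ) :
    _root_.restrict U (u - v) = _root_.restrict U u - _root_.restrict U v := by
  ext i
  simp only [_root_.restrict, Pi.sub_apply]
  split_ifs <;> simp

lemma restrict_congr {n : ℕ} {U : Finset (Fin n)} {u v : Fin n → ℝ} (h : ∀ i ∈ U, u i = v i) :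
    _root_.restrict U u = _root_.restrict U v := by
  ext i
  simp only [_root_.restrict]
  split_ifs with hi <;> simp [h i, hi]

lemma enorm2_restrict_mono {n : ℕ} {U V : Finset (Fin n)} (h : U ⊆ V) (w : Fin n → ℝ) :
    enorm2 (restrict U w) ≤ enorm2 (restrict V w) := by
  rw [enorm2_restrict, enorm2_restrict]
  exact Real.sqrt_le_sqrt (sum_le_sum_of_subset_of_nonneg h fun i _ _ => sq_nonneg (w i))

lemma enorm2_restrict_sdiff_of_eq_zero {n : ℕ} (U V : Finset (Fin n)) {w : Fin n → ℝ}
    (h : ∀ i ∈ V, w i = 0) : enorm2 (restrict (U \ V) w) = enorm2 (restrict U w) := by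
  rw [enorm2_restrict, enorm2_restrict, ← sum_inter_add_sum_sdiff U V,
    sum_eq_zero (s := U ∩ V) fun i hi => by simp [h i (mem_inter.1 hi).2], zero_add]

lemma enorm2_restrict_sdiff_le_of_le {n : ℕ} {U V : Finset (Fin n)} {w : Fin n → ℝ}
    (h : enorm2 (restrict U w) ≤ enorm2 (restrict V w)) :
    enorm2 (restrict (U \ V) w) ≤ enorm2 (restrict (V \ U) w) := by
  rw [enorm2_restrict, enorm2_restrict] at h ⊢
  exact Real.sqrt_le_sqrt <| sum_sdiff_le_sum_sdiff.2 <|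
    (Real.sqrt_le_sqrt_iff (sum_nonneg fun i _ => sq_nonneg (w i))).1 h

lemma enorm2_restrict_add_le_of_disjoint {n : ℕ} {U V : Finset (Fin n)} (h : Disjoint U V)
    (w : Fin n → ℝ) :
    enorm2 (restrict U w) + enorm2 (restrict V w) ≤ √2 * enorm2 (restrict (U ∪ V) w) := by
  have hsq : ∀ W : Finset (Fin n), enorm2 (restrict W w) ^ 2 = ∑ i ∈ W, w i ^ 2 := fun W => by
    rw [enorm2_restrict, Real.sq_sqrt (sum_nonneg fun i _ => sq_nonneg (w i))]
  rw [enorm2_restrict (U ∪ V), sum_union h, ← hsq, ← hsq]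
  exact add_le_sqrt_two_mul_sqrt_sq_add_sq _ _

theorem stmt10_general {N : ℕ} (S T T' Tnab : Finset (Fin N))
    (hT' : T' ⊆ T \ S) (hTnabsub : Tnab ⊆ T)
    (x z : Fin N → ℝ) (hz : enorm2 (restrict Tnab z) ≤ enorm2 (restrict T' z))
    (hx : ∀ i ∉ S, x i = 0) :
    enorm2 (restrict Tnab x) ≤ Real.sqrt 2 * enorm2 (restrict T (fun i => z i - x i)) := by
  set w : Fin N → ℝ := fun i => z i - x i
  have hxT' : ∀ i ∈ T', x i = 0 := fun i hi => hx i (mem_sdiff.1 (hT' hi)).2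
  have hzw : ∀ i ∈ T' \ Tnab, z i = w i := fun i hi => by simp [w, hxT' i (mem_sdiff.1 hi).1]
  have hxzw : x = z - w := by ext i; simp [w]
  calc enorm2 (restrict Tnab x) = enorm2 (restrict (Tnab \ T') x) :=
        (enorm2_restrict_sdiff_of_eq_zero Tnab T' hxT').symm
    _ ≤ enorm2 (restrict (Tnab \ T') z) + enorm2 (restrict (Tnab \ T') w) := by
        rw [hxzw, restrict_sub]; exact enorm2_sub_le _ _
    _ ≤ enorm2 (restrict (T' \ Tnab) w) + enorm2 (restrict (Tnab \ T') w) := by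
        rw [← restrict_congr hzw]; gcongr; exact enorm2_restrict_sdiff_le_of_le hz
    _ ≤ √2 * enorm2 (restrict (T' \ Tnab ∪ Tnab \ T') w) :=
        enorm2_restrict_add_le_of_disjoint disjoint_sdiff_sdiff w
    _ ≤ √2 * enorm2 (restrict T w) := by
        gcongr
        exact enorm2_restrict_mono (union_subset
          ((sdiff_subset.trans hT').trans sdiff_subset) (sdiff_subset.trans hTnabsub)) w

theorem stmt10 {N : ℕ} (s t : ℕ) (S T T' Tnab : Finset (Fin N))
    (hTcard : T.card = t) (hT' : T' ⊆ T \ S) (hT'card : T'.card = t - s)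
    (hTnabsub : Tnab ⊆ T) (hTnabcard : Tnab.card = t - s)
    (x z : Fin N → ℝ) (hz : enorm2 (restrict Tnab z) ≤ enorm2 (restrict T' z))
    (hx : ∀ i ∉ S, x i = 0) :
    enorm2 (restrict Tnab x) ≤ Real.sqrt 2 * enorm2 (restrict T (fun i => z i - x i)) :=
  stmt10_general S T T' Tnab hT' hTnabsub x z hz hx
end

section
/- One CoSaMP iteration contraction: suppose nonnegative reals A := ‖x_S − x^{n−1}‖₂, B := ‖(x_S)_{complement of S̃^n}‖₂, C := ‖x_S − x̃^n‖₂, D := ‖(x_S)_{S_∇}‖₂, G := ‖(x_S − x^n)_{S^n}‖₂, F := ‖x_S − x^n‖₂, e := ‖e'‖₂ and δ := δ_{4s} ∈ [0,1) satisfy: B ≤ √2·δ·A + √(2(1+δ))·e; C ≤ √(1/(1−δ²))·B + (√(1+δ)/(1−δ))·e; D ≤ √2·δ·C + √(2(1+δ))·e; G ≤ δ·C + √(1+δ)·e; F² = G² + D² + B². Then F ≤ ρ·A + (1−ρ)·τ·e with ρ = √(2δ²(1+2δ²)/(1−δ²)) and (1−ρ)τ = (√2+1)·δ·(√(2(1−δ))+√(1+δ))/(1−δ)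 + (2√2+1)·√(1+δ). -/
open Finset Matrix

/-! If `u ≤ a x + b y` and `v ≤ c x + d y`, the triangle inequality in `ℝ²` gives
`√(u² + v²) ≤ x ‖(a, c)‖ + y ‖(b, d)‖ ≤ k x + (b + d) y` whenever `a² + c² ≤ k²`.
Applied to `(G, D)` this bounds `√(G² + D²)` by `√3 δ C + (1 + √2) √(1 + δ) e`; inserting the
bound on `C` and applying it once more to `(√(G² + D²), B)` bounds `F` by
`√((1 + 2δ²)/(1 - δ²)) B + O(e)`, and the bound on `B` then produces the coefficient `ρ` of `A`
exactly. The noise coefficient only needs `√3 ≤ √2 + 1` and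
`√(1 + 2δ²) ≤ √(1 - δ²) + (√2 + 1) δ`. -/

open Real

theorem sq_add_sq_le_sq_of_le {u v a b c d k x y : ℝ} (hu : 0 ≤ u) (hv : 0 ≤ v)
    (hb : 0 ≤ b) (hd : 0 ≤ d) (hk : 0 ≤ k) (hx : 0 ≤ x) (hy : 0 ≤ y)
    (hac : a ^ 2 + c ^ 2 ≤ k ^ 2) (hua : u ≤ a * x + b * y) (hvc : v ≤ c * x + d * y) :
    u ^ 2 + v ^ 2 ≤ (k * x + (b + d) * y) ^ 2 := by
  have ha : a ≤ k := by nlinarith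
  have hc : c ≤ k := by nlinarith
  have hxy : 0 ≤ x * y := mul_nonneg hx hy
  calc u ^ 2 + v ^ 2 ≤ (a * x + b * y) ^ 2 + (c * x + d * y) ^ 2 := by
        gcongr
    _ ≤ (k * x + (b + d) * y) ^ 2 := by
        nlinarith [mul_le_mul_of_nonneg_right hac (sq_nonneg x),
          mul_nonneg (mul_nonneg hb hd) (sq_nonneg y),
          mul_le_mul_of_nonneg_right ha (mul_nonneg hb hxy),
          mul_le_mul_of_nonneg_right hc (mul_nonneg hd hxy)]

theorem sqrt_three_le_sqrt_two_add_one : √3 ≤ √2 + 1 :=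
  sqrt_le_iff.mpr ⟨by positivity, by nlinarith [sq_sqrt (zero_le_two : (0 : ℝ) ≤ 2), sqrt_nonneg 2]⟩

theorem sqrt_one_add_two_mul_sq_le {δ : ℝ} (hδ0 : 0 ≤ δ) (hδ1 : δ ≤ 1) :
    √(1 + 2 * δ ^ 2) ≤ √(1 - δ ^ 2) + (√2 + 1) * δ := by
  have h : 0 ≤ 1 - δ ^ 2 := by nlinarith
  refine sqrt_le_iff.mpr ⟨by positivity, ?_⟩
  nlinarith [sq_sqrt h, sq_sqrt (zero_le_two : (0 : ℝ) ≤ 2), sqrt_nonneg 2,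
    mul_nonneg (mul_nonneg (sqrt_nonneg 2) hδ0) (sqrt_nonneg (1 - δ ^ 2)),
    mul_nonneg hδ0 (sqrt_nonneg (1 - δ ^ 2))]

theorem sqrt_div_one_sub_sq_mul_sqrt_le {δ : ℝ} (hδ0 : 0 ≤ δ) (hδ1 : δ < 1) :
    √((1 + 2 * δ ^ 2) / (1 - δ ^ 2)) * √(1 + δ) ≤
      √(1 + δ) + (√2 + 1) * δ * √(1 - δ) / (1 - δ) := by
  have hm : 0 < 1 - δ := by linarith
  have hss : √(1 - δ) ^ 2 = 1 - δ := sq_sqrt hm.le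
  have hδ2 : 0 < 1 - δ ^ 2 := by nlinarith
  calc √((1 + 2 * δ ^ 2) / (1 - δ ^ 2)) * √(1 + δ) = √(1 + 2 * δ ^ 2) / √(1 - δ) := by
        rw [← sqrt_mul (div_nonneg (by positivity) hδ2.le), ← sqrt_div' _ hm.le]
        congr 1
        field_simp
        ring
    _ ≤ (√(1 - δ ^ 2) + (√2 + 1) * δ) / √(1 - δ) := by
        gcongr
        exact sqrt_one_add_two_mul_sq_le hδ0 hδ1.le
    _ = √(1 + δ) + (√2 + 1) * δ * √(1 - δ) / (1 - δ) := by
        rw [show 1 - δ ^ 2 = (1 - δ) * (1 + δ) by ring, sqrt_mul hm.le]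
        field_simp
        linear_combination (-δ * (√2 + 1)) * hss

theorem cosamp_residual_le {B C D G F e δ : ℝ} (hB0 : 0 ≤ B) (hC0 : 0 ≤ C) (hD0 : 0 ≤ D)
    (hG0 : 0 ≤ G) (he : 0 ≤ e) (hδ0 : 0 ≤ δ) (hδ1 : δ < 1)
    (hC : C ≤ √(1 / (1 - δ ^ 2)) * B + (√(1 + δ) / (1 - δ)) * e)
    (hD : D ≤ √2 * δ * C + √(2 * (1 + δ)) * e)
    (hG : G ≤ δ * C + √(1 + δ) * e)
    (hF : F ^ 2 = G ^ 2 + D ^ 2 + B ^ 2) :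
    F ≤ √((1 + 2 * δ ^ 2) / (1 - δ ^ 2)) * B +
      (√3 * δ * (√(1 + δ) / (1 - δ)) + (√(1 + δ) + √(2 * (1 + δ)))) * e := by
  have hδ2 : 0 < 1 - δ ^ 2 := by nlinarith
  have hGD : G ^ 2 + D ^ 2 ≤ (√3 * δ * C + (√(1 + δ) + √(2 * (1 + δ))) * e) ^ 2 := by
    refine sq_add_sq_le_sq_of_le hG0 hD0 (by positivity) (by positivity) (by positivity) hC0 he
      (le_of_eq ?_) hG hD
    rw [mul_pow, mul_pow, sq_sqrt zero_le_two, sq_sqrt zero_le_three]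
    ring
  have hK : √3 * δ * C + (√(1 + δ) + √(2 * (1 + δ))) * e ≤
      (√3 * δ * √(1 / (1 - δ ^ 2))) * B +
        (√3 * δ * (√(1 + δ) / (1 - δ)) + (√(1 + δ) + √(2 * (1 + δ)))) * e := by
    linarith [mul_le_mul_of_nonneg_left hC (by positivity : 0 ≤ √3 * δ)]
  have hKB : (√3 * δ * √(1 / (1 - δ ^ 2))) ^ 2 + 1 ^ 2 = √((1 + 2 * δ ^ 2) / (1 - δ ^ 2)) ^ 2 := by
    rw [mul_pow, mul_pow, sq_sqrt zero_le_three, sq_sqrt (by positivity), sq_sqrt (by positivity)]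
    field_simp
    ring
  have hF2 := sq_add_sq_le_sq_of_le (by positivity) hB0 (by positivity) le_rfl (by positivity) hB0 he
    hKB.le hK (by linarith : B ≤ 1 * B + 0 * e)
  rw [add_zero] at hF2
  exact (le_abs_self F).trans (abs_le_of_sq_le_sq (by linarith) (by positivity))

theorem cosamp_signal_coeff_eq {δ : ℝ} (hδ0 : 0 ≤ δ) :
    √((1 + 2 * δ ^ 2) / (1 - δ ^ 2)) * (√2 * δ) = √(2 * δ ^ 2 * (1 + 2 * δ ^ 2) / (1 - δ ^ 2)) := by
  rw [mul_div_assoc, sqrt_mul (by positivity), sqrt_mul zero_le_two, sqrt_sq hδ0]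
  ring

theorem cosamp_noise_coeff_le {δ : ℝ} (hδ0 : 0 ≤ δ) (hδ1 : δ < 1) :
    √((1 + 2 * δ ^ 2) / (1 - δ ^ 2)) * √(2 * (1 + δ)) +
        (√3 * δ * (√(1 + δ) / (1 - δ)) + (√(1 + δ) + √(2 * (1 + δ)))) ≤
      (√2 + 1) * δ * (√(2 * (1 - δ)) + √(1 + δ)) / (1 - δ) + (2 * √2 + 1) * √(1 + δ) := by
  have h1 := mul_le_mul_of_nonneg_left (sqrt_div_one_sub_sq_mul_sqrt_le hδ0 hδ1) (sqrt_nonneg 2)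
  have h2 : √3 * δ * (√(1 + δ) / (1 - δ)) ≤ (√2 + 1) * δ * (√(1 + δ) / (1 - δ)) := by
    gcongr
    exact sqrt_three_le_sqrt_two_add_one
  rw [sqrt_mul zero_le_two (1 + δ), sqrt_mul zero_le_two (1 - δ)]
  linear_combination h1 + h2

theorem stmt18_general (A B C D G F e δ : ℝ)
    (hB0 : 0 ≤ B) (hC0 : 0 ≤ C) (hD0 : 0 ≤ D) (hG0 : 0 ≤ G)
    (he : 0 ≤ e) (hδ0 : 0 ≤ δ) (hδ1 : δ < 1)
    (hB : B ≤ Real.sqrt 2 * δ * A + Real.sqrt (2*(1+δ)) * e)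
    (hC : C ≤ Real.sqrt (1/(1-δ^2)) * B + (Real.sqrt (1+δ)/(1-δ)) * e)
    (hD : D ≤ Real.sqrt 2 * δ * C + Real.sqrt (2*(1+δ)) * e)
    (hG : G ≤ δ * C + Real.sqrt (1+δ) * e)
    (hF : F^2 = G^2 + D^2 + B^2) :
    F ≤ Real.sqrt (2*δ^2*(1+2*δ^2)/(1-δ^2)) * A +
      ((Real.sqrt 2 + 1) * δ * (Real.sqrt (2*(1-δ)) + Real.sqrt (1+δ))/(1-δ) +
       (2*Real.sqrt 2 + 1) * Real.sqrt (1+δ)) * e := by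
  calc F ≤ √((1 + 2 * δ ^ 2) / (1 - δ ^ 2)) * B +
          (√3 * δ * (√(1 + δ) / (1 - δ)) + (√(1 + δ) + √(2 * (1 + δ)))) * e :=
        cosamp_residual_le hB0 hC0 hD0 hG0 he hδ0 hδ1 hC hD hG hF
    _ ≤ √((1 + 2 * δ ^ 2) / (1 - δ ^ 2)) * (√2 * δ * A + √(2 * (1 + δ)) * e) +
          (√3 * δ * (√(1 + δ) / (1 - δ)) + (√(1 + δ) + √(2 * (1 + δ)))) * e := by
        gcongr
    _ = √((1 + 2 * δ ^ 2) / (1 - δ ^ 2)) * (√2 * δ) * A +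
          (√((1 + 2 * δ ^ 2) / (1 - δ ^ 2)) * √(2 * (1 + δ)) +
            (√3 * δ * (√(1 + δ) / (1 - δ)) + (√(1 + δ) + √(2 * (1 + δ))))) * e := by
        ring
    _ ≤ _ := by
        rw [cosamp_signal_coeff_eq hδ0]
        gcongr _ + ?_ * e
        exact cosamp_noise_coeff_le hδ0 hδ1

theorem stmt18 (A B C D G F e δ : ℝ)
    (hA : 0 ≤ A) (hB0 : 0 ≤ B) (hC0 : 0 ≤ C) (hD0 : 0 ≤ D) (hG0 : 0 ≤ G)
    (hF0 : 0 ≤ F) (he : 0 ≤ e) (hδ0 : 0 ≤ δ) (hδ1 : δ < 1)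
    (hB : B ≤ Real.sqrt 2 * δ * A + Real.sqrt (2*(1+δ)) * e)
    (hC : C ≤ Real.sqrt (1/(1-δ^2)) * B + (Real.sqrt (1+δ)/(1-δ)) * e)
    (hD : D ≤ Real.sqrt 2 * δ * C + Real.sqrt (2*(1+δ)) * e)
    (hG : G ≤ δ * C + Real.sqrt (1+δ) * e)
    (hF : F^2 = G^2 + D^2 + B^2) :
    F ≤ Real.sqrt (2*δ^2*(1+2*δ^2)/(1-δ^2)) * A +
      ((Real.sqrt 2 + 1) * δ * (Real.sqrt (2*(1-δ)) + Real.sqrt (1+δ))/(1-δ) +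
       (2*Real.sqrt 2 + 1) * Real.sqrt (1+δ)) * e :=
  stmt18_general A B C D G F e δ hB0 hC0 hD0 hG0 he hδ0 hδ1 hB hC hD hG hF
end
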